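/- arXiv:1901.07254 — 5 statements merged into one kernel-verified Lean document; each statement's English description precedes it below -/
import Mathlib

section
/- Let Ω ⊆ ℂ be open, let Δ : Ω → ℂ^{p×p} be holomorphic (each matrix entry is complex-differentiable on Ω), and let z₀ ∈ Ω be a simple zero of det Δ, i.e., det Δ(z₀) = 0 and the complex derivative of z ↦ det Δ(z) at z₀ is nonzero. Then the kernel of the linear map ℂ^p → ℂ^p given by the matrix Δ(z₀) has dimension 1. -/
/-!
By Jacobi's formula, the derivative of `det Δ` at `z₀` is the sum over `j` of the determinants of
`Δ z₀` with its `j`-th column replaced by the derivative of that column. The kernel of `Δ z₀` is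
nonzero because `det Δ z₀ = 0`. If it had dimension at least two, then for each `j` it would contain
a nonzero vector with vanishing `j`-th coordinate; that vector is also killed by every matrix
obtained from `Δ z₀` by changing its `j`-th column, so every summand, and hence the derivative,
would vanish.
-/

open Matrix

theorem Matrix.hasDerivAt_det {𝕜 R n : Type*} [NontriviallyNormedField 𝕜] [NormedCommRing R]
    [NormedAlgebra 𝕜 R] [Fintype n] [DecidableEq n] {M : 𝕜 → Matrix n n R} {M' : Matrix n n R}
    {x : 𝕜} (hM : ∀ i j, HasDerivAt (fun y => M y i j) (M' i j) x) :
    HasDerivAt (fun y => (M y).det) (∑ j, ((M x).updateCol j fun i => M' i j).det) x := by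
  have hterm : ∀ σ : Equiv.Perm n,
      HasDerivAt (fun y => (Equiv.Perm.sign σ : R) * ∏ i, M y (σ i) i)
      ((Equiv.Perm.sign σ : R) * ∑ i, (∏ j ∈ Finset.univ.erase i, M x (σ j) j) • M' (σ i) i) x :=
    fun σ => (HasDerivAt.fun_finsetProd fun i _ => hM (σ i) i).const_mul _
  simp only [det_apply']
  refine (HasDerivAt.fun_sum fun σ _ => hterm σ).congr_deriv ?_
  simp only [Finset.mul_sum, smul_eq_mul]
  rw [Finset.sum_comm]
  refine Finset.sum_congr rfl fun j _ => Finset.sum_congr rfl fun σ _ => ?_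
  rw [← Finset.mul_prod_erase _ (fun k => (M x).updateCol j (fun i => M' i j) (σ k) k)
    (Finset.mem_univ j), updateCol_self,
    Finset.prod_congr rfl fun k hk => updateCol_ne (Finset.ne_of_mem_erase hk)]
  ring

theorem Matrix.det_updateCol_eq_zero_of_two_le_finrank_ker {K n : Type*} [Field K] [Fintype n]
    [DecidableEq n] {M : Matrix n n K} (hM : 2 ≤ Module.finrank K (LinearMap.ker M.mulVecLin))
    (j : n) (c : n → K) : (M.updateCol j c).det = 0 := by
  have hker : LinearMap.ker ((LinearMap.proj j).comp (LinearMap.ker M.mulVecLin).subtype) ≠ ⊥ :=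
    LinearMap.ker_ne_bot_of_finrank_lt (by rw [Module.finrank_self]; omega)
  obtain ⟨⟨v, hv⟩, hvj, hv0⟩ := Submodule.exists_mem_ne_zero_of_ne_bot hker
  refine exists_mulVec_eq_zero_iff.mp ⟨v, fun h => hv0 (Subtype.ext h), ?_⟩
  replace hvj : v j = 0 := hvj
  rw [← LinearMap.mem_ker.mp hv]
  ext i
  refine Finset.sum_congr rfl fun k _ => ?_
  by_cases hk : k = j
  · simp [hk, hvj]
  · simp [updateCol_ne hk]

theorem Matrix.finrank_ker_mulVecLin_pos {K n : Type*} [Field K] [Fintype n] [DecidableEq n]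
    {M : Matrix n n K} (hM : M.det = 0) : 0 < Module.finrank K (LinearMap.ker M.mulVecLin) := by
  obtain ⟨v, hv0, hv⟩ := exists_mulVec_eq_zero_iff.mpr hM
  exact Module.finrank_pos_iff_exists_ne_zero.mpr ⟨⟨v, hv⟩, fun h => hv0 (congrArg Subtype.val h)⟩

theorem stmt1_general {p : ℕ} (Ω : Set ℂ) (hΩ : IsOpen Ω)
    (Δ : ℂ → Matrix (Fin p) (Fin p) ℂ)
    (hΔ : ∀ i j, DifferentiableOn ℂ (fun z => Δ z i j) Ω)
    (z₀ : ℂ) (hz₀ : z₀ ∈ Ω)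
    (hdet0 : (Δ z₀).det = 0)
    (hdet' : deriv (fun z => (Δ z).det) z₀ ≠ 0) :
    Module.finrank ℂ (LinearMap.ker (Δ z₀).mulVecLin) = 1 := by
  have hpos := finrank_ker_mulVecLin_pos hdet0
  by_contra hne
  have hDΔ : ∀ i j, HasDerivAt (fun z => Δ z i j) (deriv (fun z => Δ z i j) z₀) z₀ :=
    fun i j => ((hΔ i j).differentiableAt (hΩ.mem_nhds hz₀)).hasDerivAt
  refine hdet' ((hasDerivAt_det (M' := Matrix.of fun i j => deriv (fun z => Δ z i j) z₀)
    hDΔ).deriv.trans ?_)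
  exact Finset.sum_eq_zero fun j _ => det_updateCol_eq_zero_of_two_le_finrank_ker (by omega) j _

/-- If `Δ : Ω → ℂ^{p×p}` is holomorphic on the open set `Ω` and `z₀ ∈ Ω` is a simple zero of
`det Δ`, then the kernel of the linear map given by `Δ z₀` has dimension 1. -/
theorem stmt1 {p : ℕ} (hp : 1 ≤ p) (Ω : Set ℂ) (hΩ : IsOpen Ω)
    (Δ : ℂ → Matrix (Fin p) (Fin p) ℂ)
    (hΔ : ∀ i j, DifferentiableOn ℂ (fun z => Δ z i j) Ω)
    (z₀ : ℂ) (hz₀ : z₀ ∈ Ω)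
    (hdet0 : (Δ z₀).det = 0)
    (hdet' : deriv (fun z => (Δ z).det) z₀ ≠ 0) :
    Module.finrank ℂ (LinearMap.ker (Δ z₀).mulVecLin) = 1 :=
  stmt1_general Ω hΩ Δ hΔ z₀ hz₀ hdet0 hdet'
end

section
/- Let n₁, n₂, p, k, m ≥ 1, and let P₁ ∈ ℂ^{n₁×n₁}, Q₁ ∈ ℂ^{n₁×k}, R₁ ∈ ℂ^{p×n₁}, S₁ ∈ ℂ^{p×k}, P₂ ∈ ℂ^{n₂×n₂}, Q₂ ∈ ℂ^{n₂×m}, R₂ ∈ ℂ^{k×n₂}, S₂ ∈ ℂ^{k×m}. For z not an eigenvalue of P_ℓ define K₁(z) := R₁(zI − P₁)⁻¹Q₁ + S₁ and K₂(z) := R₂(zI − P₂)⁻¹Q₂ + S₂. Assume: (i) no λ ∈ ℂ with |λ| ≥ 1 is an eigenvalue of both P₁ and P₂; (ii) for every eigenvalue λ of P₂ with |λ| ≥ 1, the matrix K₁(λ) has full column rank k; (iii) for every eigenvalue λ of P₁ with |λ| ≥ 1, the matrix K₂(λ) has full row rank k; (iv) (P₁,Q₁) and (P₂,Q₂) are stabilizable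 and (R₁,P₁) and (R₂,P₂) are detectable. Then, setting P := [[P₁, Q₁R₂],[0, P₂]] (an (n₁+n₂)×(n₁+n₂) block matrix), Q := [Q₁S₂; Q₂] (block column), and R := [R₁, S₁R₂] (block row), the pair (P,Q) is stabilizable and the pair (R,P) is detectable. -/
open Matrix

/-- `(P,Q)` is stabilizable: for every `λ` with `|λ| ≥ 1` and every `ψ` with
`ψ*(λI − P) = 0` and `ψ*Q = 0`, one has `ψ = 0`. -/
def Stabilizable {n m : Type*} [Fintype n] [Fintype m] [DecidableEq n]
    (P : Matrix n n ℂ) (Q : Matrix n m ℂ) : Prop :=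
  ∀ l : ℂ, 1 ≤ ‖l‖ → ∀ ψ : n → ℂ,
    vecMul (star ψ) (l • (1 : Matrix n n ℂ) - P) = 0 → vecMul (star ψ) Q = 0 → ψ = 0

/-- `(R,P)` is detectable: for every `λ` with `|λ| ≥ 1` and every `x` with
`(λI − P)x = 0` and `Rx = 0`, one has `x = 0`. -/
def Detectable {n p : Type*} [Fintype n] [Fintype p] [DecidableEq n]
    (R : Matrix p n ℂ) (P : Matrix n n ℂ) : Prop :=
  ∀ l : ℂ, 1 ≤ ‖l‖ → ∀ x : n → ℂ,
    mulVec (l • (1 : Matrix n n ℂ) - P) x = 0 → mulVec R x = 0 → x = 0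

/-- `λ` is an eigenvalue of the square matrix `P`, i.e. a root of `det(λI − P)`. -/
def IsEigenvalue {n : Type*} [Fintype n] [DecidableEq n] (P : Matrix n n ℂ) (l : ℂ) : Prop :=
  (l • (1 : Matrix n n ℂ) - P).det = 0

/-!
The eigenvector equation of the cascade splits as `(λI − P₁)x₁ = Q₁R₂x₂`, `(λI − P₂)x₂ = 0`,
with output `R₁x₁ + S₁R₂x₂`. If `λ` is not an eigenvalue of `P₂`, then `x₂ = 0` and
detectability of `(R₁,P₁)` gives `x₁ = 0`. If it is, `λI − P₁` is invertible, so
`x₁ = (λI − P₁)⁻¹Q₁R₂x₂` and the output is `K₁(λ)R₂x₂`; injectivity of `K₁(λ)` gives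
`R₂x₂ = 0`, and detectability of `(R₂,P₂)` gives `x₂ = 0`.

Stabilizability is the transposed statement: `(P,Q)` is stabilizable iff `(Qᵀ,Pᵀ)` is detectable,
and the transposed cascade, with its two blocks swapped, is the cascade of the transposed
systems taken in the opposite order.
-/
namespace Matrix

theorem eq_zero_of_mulVec_eq_zero_of_rank_eq_card {K m n : Type*} [Field K] [Fintype n]
    {A : Matrix m n K} (hA : A.rank = Fintype.card n) {v : n → K} (hv : A *ᵥ v = 0) :
    v = 0 := by
  have hinj : Function.Injective A.mulVec := by
    rw [mulVec_injective_iff, linearIndependent_iff_card_eq_finrank_span, ← hA,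
      rank_eq_finrank_span_cols]
    rfl
  exact hinj (hv.trans (mulVec_zero A).symm)

theorem smul_one_sub_fromBlocks {n₁ n₂ α : Type*} [DecidableEq n₁] [DecidableEq n₂] [Ring α]
    (l : α) (A : Matrix n₁ n₁ α) (B : Matrix n₁ n₂ α) (D : Matrix n₂ n₂ α) :
    l • (1 : Matrix (n₁ ⊕ n₂) (n₁ ⊕ n₂) α) - fromBlocks A B 0 D =
      fromBlocks (l • 1 - A) (-B) 0 (l • 1 - D) := by
  rw [← fromBlocks_one, fromBlocks_smul]
  simp [sub_eq_add_neg, fromBlocks_neg, fromBlocks_add]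

end Matrix

section

variable {n p : Type*} [Fintype n] [Fintype p] [DecidableEq n]

theorem isEigenvalue_transpose {P : Matrix n n ℂ} {l : ℂ} :
    IsEigenvalue Pᵀ l ↔ IsEigenvalue P l := by
  rw [IsEigenvalue, IsEigenvalue, ← det_transpose]
  simp

theorem stabilizable_iff_detectable_transpose {P : Matrix n n ℂ} {Q : Matrix n p ℂ} :
    Stabilizable P Q ↔ Detectable Qᵀ Pᵀ := by
  have hT : ∀ l : ℂ, (l • (1 : Matrix n n ℂ) - P)ᵀ = l • 1 - Pᵀ := by simp
  refine forall₂_congr fun l _ => ⟨fun h x hx hQx => ?_, fun h ψ hψ hQψ => ?_⟩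
  · rw [← hT, mulVec_transpose, ← star_star x] at hx
    rw [mulVec_transpose, ← star_star x] at hQx
    simpa using h (star x) hx hQx
  · rw [← mulVec_transpose, hT] at hψ
    rw [← mulVec_transpose] at hQψ
    exact star_eq_zero.mp (h _ hψ hQψ)

theorem Detectable.submatrix {n' : Type*} [Fintype n'] [DecidableEq n'] {R : Matrix p n ℂ}
    {P : Matrix n n ℂ} (h : Detectable R P) (e : n' ≃ n) :
    Detectable (R.submatrix id e) (P.submatrix e e) := by
  intro l hl x hx hRx
  have hsub : l • (1 : Matrix n' n' ℂ) - P.submatrix e e = (l • 1 - P).submatrix e e := by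
    ext i j
    simp [one_apply]
  rw [hsub, submatrix_mulVec_equiv] at hx
  rw [submatrix_mulVec_equiv] at hRx
  have h0 : x ∘ e.symm = 0 :=
    h l hl _ (funext fun i => by simpa using congrFun hx (e.symm i)) (by simpa using hRx)
  funext i
  simpa using congrFun h0 (e i)

end

section Cascade

variable {n₁ n₂ p k m : Type*} [Fintype n₁] [Fintype n₂] [Fintype p] [Fintype k] [Fintype m]
  [DecidableEq n₁] [DecidableEq n₂]

theorem detectable_cascade {P₁ : Matrix n₁ n₁ ℂ} {Q₁ : Matrix n₁ k ℂ} {R₁ : Matrix p n₁ ℂ}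
    {S₁ : Matrix p k ℂ} {P₂ : Matrix n₂ n₂ ℂ} {R₂ : Matrix k n₂ ℂ}
    (hdisj : ∀ l : ℂ, 1 ≤ ‖l‖ → ¬(IsEigenvalue P₁ l ∧ IsEigenvalue P₂ l))
    (hK₁ : ∀ l : ℂ, 1 ≤ ‖l‖ → IsEigenvalue P₂ l →
      (R₁ * (l • (1 : Matrix n₁ n₁ ℂ) - P₁)⁻¹ * Q₁ + S₁).rank = Fintype.card k)
    (hdet₁ : Detectable R₁ P₁) (hdet₂ : Detectable R₂ P₂) :
    Detectable (fromCols R₁ (S₁ * R₂)) (fromBlocks P₁ (Q₁ * R₂) 0 P₂) := by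
  intro l hl x hx hRx
  obtain ⟨x₁, x₂, rfl⟩ : ∃ x₁ x₂, x = x₁ ⊕ᵥ x₂ := ⟨_, _, (Sum.elim_comp_inl_inr x).symm⟩
  rw [smul_one_sub_fromBlocks, fromBlocks_mulVec, ← Sum.elim_zero_zero] at hx
  simp only [Sum.elim_comp_inl, Sum.elim_comp_inr, Sum.elim_eq_iff, zero_mulVec, zero_add] at hx
  obtain ⟨hx₁, hx₂⟩ := hx
  rw [neg_mulVec, ← sub_eq_add_neg, sub_eq_zero, ← mulVec_mulVec] at hx₁
  rw [fromCols_mulVec_sumElim, ← mulVec_mulVec] at hRx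
  suffices hx₂0 : x₂ = 0 by
    subst hx₂0
    simp only [mulVec_zero, add_zero] at hx₁ hRx
    rw [hdet₁ l hl x₁ hx₁ hRx, Sum.elim_zero_zero]
  by_cases heig : IsEigenvalue P₂ l
  · have hunit : IsUnit (l • (1 : Matrix n₁ n₁ ℂ) - P₁).det :=
      isUnit_iff_ne_zero.mpr fun h => hdisj l hl ⟨h, heig⟩
    have hx₁' : x₁ = ((l • 1 - P₁)⁻¹ * Q₁) *ᵥ (R₂ *ᵥ x₂) := by
      rw [← mulVec_mulVec, ← hx₁, mulVec_mulVec, nonsing_inv_mul _ hunit, one_mulVec]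
    refine hdet₂ l hl x₂ hx₂ (eq_zero_of_mulVec_eq_zero_of_rank_eq_card (hK₁ l hl heig) ?_)
    rw [add_mulVec, Matrix.mul_assoc, ← mulVec_mulVec, ← hx₁', hRx]
  · exact eq_zero_of_mulVec_eq_zero heig hx₂

theorem stabilizable_cascade {P₁ : Matrix n₁ n₁ ℂ} {Q₁ : Matrix n₁ k ℂ} {P₂ : Matrix n₂ n₂ ℂ}
    {Q₂ : Matrix n₂ m ℂ} {R₂ : Matrix k n₂ ℂ} {S₂ : Matrix k m ℂ}
    (hdisj : ∀ l : ℂ, 1 ≤ ‖l‖ → ¬(IsEigenvalue P₁ l ∧ IsEigenvalue P₂ l))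
    (hK₂ : ∀ l : ℂ, 1 ≤ ‖l‖ → IsEigenvalue P₁ l →
      (R₂ * (l • (1 : Matrix n₂ n₂ ℂ) - P₂)⁻¹ * Q₂ + S₂).rank = Fintype.card k)
    (hstab₁ : Stabilizable P₁ Q₁) (hstab₂ : Stabilizable P₂ Q₂) :
    Stabilizable (fromBlocks P₁ (Q₁ * R₂) 0 P₂) (fromRows (Q₁ * S₂) Q₂) := by
  rw [stabilizable_iff_detectable_transpose] at hstab₁ hstab₂ ⊢
  have hK₂_dual : ∀ l : ℂ, 1 ≤ ‖l‖ → IsEigenvalue P₁ᵀ l →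
      (Q₂ᵀ * (l • (1 : Matrix n₂ n₂ ℂ) - P₂ᵀ)⁻¹ * R₂ᵀ + S₂ᵀ).rank = Fintype.card k := by
    intro l hl heig
    rw [isEigenvalue_transpose] at heig
    rw [← hK₂ l hl heig, ← rank_transpose]
    simp [transpose_nonsing_inv, Matrix.mul_assoc]
  have hdual := detectable_cascade (Q₁ := R₂ᵀ) (S₁ := S₂ᵀ)
    (fun l hl h => hdisj l hl (by simpa only [isEigenvalue_transpose, and_comm] using h))
    hK₂_dual hstab₂ hstab₁
  convert hdual.submatrix (Equiv.sumComm n₁ n₂) using 1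
  · ext i (j | j) <;> simp [mul_apply, mul_comm]
  · rw [fromBlocks_transpose]
    exact (fromBlocks_submatrix_sum_swap_sum_swap _ _ _ _).symm.trans (by simp)

end Cascade

theorem stmt3_general {n₁ n₂ p k m : ℕ}
    (P₁ : Matrix (Fin n₁) (Fin n₁) ℂ) (Q₁ : Matrix (Fin n₁) (Fin k) ℂ)
    (R₁ : Matrix (Fin p) (Fin n₁) ℂ) (S₁ : Matrix (Fin p) (Fin k) ℂ)
    (P₂ : Matrix (Fin n₂) (Fin n₂) ℂ) (Q₂ : Matrix (Fin n₂) (Fin m) ℂ)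
    (R₂ : Matrix (Fin k) (Fin n₂) ℂ) (S₂ : Matrix (Fin k) (Fin m) ℂ)
    (hdisj : ∀ l : ℂ, 1 ≤ ‖l‖ → ¬(IsEigenvalue P₁ l ∧ IsEigenvalue P₂ l))
    (hK₁rank : ∀ l : ℂ, 1 ≤ ‖l‖ → IsEigenvalue P₂ l →
      (R₁ * (l • (1 : Matrix (Fin n₁) (Fin n₁) ℂ) - P₁)⁻¹ * Q₁ + S₁).rank = k)
    (hK₂rank : ∀ l : ℂ, 1 ≤ ‖l‖ → IsEigenvalue P₁ l →
      (R₂ * (l • (1 : Matrix (Fin n₂) (Fin n₂) ℂ) - P₂)⁻¹ * Q₂ + S₂).rank = k)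
    (hstab₁ : Stabilizable P₁ Q₁) (hstab₂ : Stabilizable P₂ Q₂)
    (hdet₁ : Detectable R₁ P₁) (hdet₂ : Detectable R₂ P₂) :
    Stabilizable (fromBlocks P₁ (Q₁ * R₂) 0 P₂) (fromRows (Q₁ * S₂) Q₂) ∧
    Detectable (fromCols R₁ (S₁ * R₂)) (fromBlocks P₁ (Q₁ * R₂) 0 P₂) := by
  have hcard : k = Fintype.card (Fin k) := (Fintype.card_fin k).symm
  exact ⟨stabilizable_cascade hdisj (fun l hl h => (hK₂rank l hl h).trans hcard) hstab₁ hstab₂,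
    detectable_cascade hdisj (fun l hl h => (hK₁rank l hl h).trans hcard) hdet₁ hdet₂⟩

/-- Stabilizability and detectability of the cascade realization of `K₁K₂`. -/
theorem stmt3 {n₁ n₂ p k m : ℕ} (hn₁ : 1 ≤ n₁) (hn₂ : 1 ≤ n₂) (hpk : 1 ≤ p)
    (hk : 1 ≤ k) (hm : 1 ≤ m)
    (P₁ : Matrix (Fin n₁) (Fin n₁) ℂ) (Q₁ : Matrix (Fin n₁) (Fin k) ℂ)
    (R₁ : Matrix (Fin p) (Fin n₁) ℂ) (S₁ : Matrix (Fin p) (Fin k) ℂ)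
    (P₂ : Matrix (Fin n₂) (Fin n₂) ℂ) (Q₂ : Matrix (Fin n₂) (Fin m) ℂ)
    (R₂ : Matrix (Fin k) (Fin n₂) ℂ) (S₂ : Matrix (Fin k) (Fin m) ℂ)
    (hdisj : ∀ l : ℂ, 1 ≤ ‖l‖ → ¬(IsEigenvalue P₁ l ∧ IsEigenvalue P₂ l))
    (hK₁rank : ∀ l : ℂ, 1 ≤ ‖l‖ → IsEigenvalue P₂ l →
      (R₁ * (l • (1 : Matrix (Fin n₁) (Fin n₁) ℂ) - P₁)⁻¹ * Q₁ + S₁).rank = k)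
    (hK₂rank : ∀ l : ℂ, 1 ≤ ‖l‖ → IsEigenvalue P₁ l →
      (R₂ * (l • (1 : Matrix (Fin n₂) (Fin n₂) ℂ) - P₂)⁻¹ * Q₂ + S₂).rank = k)
    (hstab₁ : Stabilizable P₁ Q₁) (hstab₂ : Stabilizable P₂ Q₂)
    (hdet₁ : Detectable R₁ P₁) (hdet₂ : Detectable R₂ P₂) :
    Stabilizable (fromBlocks P₁ (Q₁ * R₂) 0 P₂) (fromRows (Q₁ * S₂) Q₂) ∧
    Detectable (fromCols R₁ (S₁ * R₂)) (fromBlocks P₁ (Q₁ * R₂) 0 P₂) :=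
  stmt3_general P₁ Q₁ R₁ S₁ P₂ Q₂ R₂ S₂ hdisj hK₁rank hK₂rank hstab₁ hstab₂ hdet₁ hdet₂
end

section
/- Let p ≥ 1 and let N, D be p×p matrices over the field ℂ(z) of rational functions such that: every entry of N and of D lies in rational H∞(𝔼₁); det D is not strictly proper; N and D are left coprime over rational H∞(𝔼₁), i.e., there exist p×p matrices X, Y₀ over ℂ(z) with all entries in rational H∞(𝔼₁) such that N·X + D·Y₀ = I; the zeros of det D in {z ∈ ℂ : |z| ≥ 1} are χ₁, …, χ_Υ, each a simple zero of det D; and for each r ∈ {1,…,Υ}, ψ_r ∈ ℂ^p is a nonzero vector with kernel of D(χ_r)* equal to {αψ_r : α ∈ ℂ}. Then for every p×p matrix Y over ℂ(z) with all entries in rational H∞(𝔼₁), the following are equivalent: (i) every entry of Y is strictly proper and there exists a p×p matrix Z over ℂ(z) with all entries in rational H∞(𝔼₁) such that N·Y + D·Z = I; (ii) every entry of Y is strictly proper and ψ_r*·N(χ_r)·Y(χ_r) = ψ_r* for all r ∈ {1,…,Υ}. Moreover, if (ii) holds, then the matrix Z := (det D)⁻¹·(adj D − adj D·N·Y), computed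 in matrices over ℂ(z), has all entries in rational H∞(𝔼₁) and satisfies N·Y + D·Z = I. -/
open Matrix Polynomial

set_option synthInstance.maxHeartbeats 1000000

/-- Entrywise evaluation of a matrix of rational functions at a point. -/
noncomputable def evalRM {p q : ℕ} (M : Matrix (Fin p) (Fin q) (RatFunc ℂ)) (z : ℂ) :
    Matrix (Fin p) (Fin q) ℂ :=
  Matrix.of fun i j => RatFunc.eval (RingHom.id ℂ) z (M i j)

/-- `f` is proper: numerator degree ≤ denominator degree (in lowest terms). -/
def Proper (f : RatFunc ℂ) : Prop := f.num.degree ≤ f.denom.degree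

/-- `f` is strictly proper: numerator degree < denominator degree (in lowest terms). -/
def StrictlyProper (f : RatFunc ℂ) : Prop := f.num.degree < f.denom.degree

/-- `f` belongs to rational `H∞(𝔼₁)`: it is proper and has no pole in `{z : |z| ≥ 1}`. -/
def MemRHinf (f : RatFunc ℂ) : Prop :=
  Proper f ∧ ∀ z : ℂ, 1 ≤ ‖z‖ → Polynomial.eval z f.denom ≠ 0

/-- `χ` is a simple zero of `f`: `f = (z − χ)·h` with `h` having no pole at `χ` and `h(χ) ≠ 0`. -/
def SimpleZero (f : RatFunc ℂ) (χ : ℂ) : Prop :=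
  ∃ h : RatFunc ℂ, f = (RatFunc.X - RatFunc.C χ) * h ∧
    Polynomial.eval χ h.denom ≠ 0 ∧ RatFunc.eval (RingHom.id ℂ) χ h ≠ 0


/-!
Since `det D` is proper and not strictly proper, `(det D)⁻¹` is proper, and
`Z := (det D)⁻¹ • adj D (I - N Y)` always solves `N Y + D Z = I`; the only question is whether `Z`
has poles in `|z| ≥ 1`, and these can only sit at the simple zeros `χ_r` of `det D`. Every row of
`adj D(χ_r)` lies in the left kernel of `D(χ_r)`, hence is a multiple of `ψ_r*`, so the
interpolation condition `ψ_r* (I - N Y)(χ_r) = 0` makes `adj D (I - N Y)` vanish at `χ_r` and cancels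
the simple pole. Conversely, evaluating `N Y + D Z = I` at `χ_r` and multiplying by `ψ_r*` on the
left, which kills `D(χ_r)`, gives the interpolation condition.
-/

section Proper

variable {f g : RatFunc ℂ}

lemma proper_iff_intDegree_nonpos (hf : f ≠ 0) : Proper f ↔ f.intDegree ≤ 0 := by
  rw [Proper, degree_eq_natDegree (RatFunc.num_ne_zero hf), degree_eq_natDegree f.denom_ne_zero,
    Nat.cast_le, RatFunc.intDegree]
  omega

lemma strictlyProper_iff_intDegree_neg (hf : f ≠ 0) : StrictlyProper f ↔ f.intDegree < 0 := by
  rw [StrictlyProper, degree_eq_natDegree (RatFunc.num_ne_zero hf),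
    degree_eq_natDegree f.denom_ne_zero, Nat.cast_lt, RatFunc.intDegree]
  omega

lemma proper_iff_inftyValuation_le_one [DecidableEq (RatFunc ℂ)] :
    Proper f ↔ RatFunc.inftyValuation ℂ f ≤ 1 := by
  rcases eq_or_ne f 0 with rfl | hf
  · simp [Proper]
  · rw [proper_iff_intDegree_nonpos hf, RatFunc.inftyValuation_apply,
      RatFunc.inftyValuation_of_nonzero _ hf, ← WithZero.exp_zero, WithZero.exp_le_exp]

lemma strictlyProper_iff_inftyValuation_lt_one [DecidableEq (RatFunc ℂ)] :
    StrictlyProper f ↔ RatFunc.inftyValuation ℂ f < 1 := by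
  rcases eq_or_ne f 0 with rfl | hf
  · simp [StrictlyProper]
  · rw [strictlyProper_iff_intDegree_neg hf, RatFunc.inftyValuation_apply,
      RatFunc.inftyValuation_of_nonzero _ hf, ← WithZero.exp_zero, WithZero.exp_lt_exp]

lemma ne_zero_of_not_strictlyProper (hf : ¬ StrictlyProper f) : f ≠ 0 := by
  rintro rfl
  exact hf (by simp [StrictlyProper])

lemma Proper.inv (hf : Proper f) (hf' : ¬ StrictlyProper f) : Proper f⁻¹ := by
  classical
  rw [proper_iff_inftyValuation_le_one] at hf ⊢
  rw [strictlyProper_iff_inftyValuation_lt_one, not_lt] at hf'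
  rw [map_inv₀, le_antisymm hf hf', inv_one]

open scoped Classical in
noncomputable def properSubring : Subring (RatFunc ℂ) := (RatFunc.inftyValuation ℂ).integer

lemma mem_properSubring : f ∈ properSubring ↔ Proper f := by
  classical
  exact proper_iff_inftyValuation_le_one.symm

lemma Proper.mul (hf : Proper f) (hg : Proper g) : Proper (f * g) :=
  mem_properSubring.1 (mul_mem (mem_properSubring.2 hf) (mem_properSubring.2 hg))

end Proper

section NoPole

variable {K : Type*} [Field K] {z : K} {f : RatFunc K}

def noPoleSubring (z : K) : Subring (RatFunc K) where
  carrier := {f | f.denom.eval z ≠ 0}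
  mul_mem' {a b} ha hb h := mul_ne_zero ha hb <| by
    rw [← eval_mul]; exact eval_eq_zero_of_dvd_of_eval_eq_zero (RatFunc.denom_mul_dvd a b) h
  add_mem' {a b} ha hb h := mul_ne_zero ha hb <| by
    rw [← eval_mul]; exact eval_eq_zero_of_dvd_of_eval_eq_zero (RatFunc.denom_add_dvd a b) h
  one_mem' := by simp
  zero_mem' := by simp
  neg_mem' {a} ha h := ha <| eval_eq_zero_of_dvd_of_eval_eq_zero
    ((RatFunc.denom_dvd a.denom_ne_zero).2
      ⟨-a.num, by rw [map_neg, neg_div, RatFunc.num_div_denom]⟩) h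

lemma mem_noPoleSubring : f ∈ noPoleSubring z ↔ f.denom.eval z ≠ 0 := Iff.rfl

lemma mem_noPoleSubring_of_eq_div {p q : K[X]} (hq : q.eval z ≠ 0)
    (hf : f = algebraMap K[X] (RatFunc K) p / algebraMap K[X] (RatFunc K) q) :
    f ∈ noPoleSubring z :=
  fun h => hq <| eval_eq_zero_of_dvd_of_eval_eq_zero
    ((RatFunc.denom_dvd fun h0 => hq (by simp [h0])).2 ⟨p, hf⟩) h

noncomputable def evalHom (z : K) : noPoleSubring z →+* K where
  toFun f := RatFunc.eval (RingHom.id K) z f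
  map_one' := RatFunc.eval_one _ _
  map_mul' f g := RatFunc.eval_mul _ _ f.2 g.2
  map_zero' := RatFunc.eval_zero _ _
  map_add' f g := RatFunc.eval_add _ _ f.2 g.2

lemma inv_mem_noPoleSubring (hf : RatFunc.eval (RingHom.id K) z f ≠ 0) :
    f⁻¹ ∈ noPoleSubring z := by
  refine mem_noPoleSubring_of_eq_div (p := f.denom) (q := f.num) (fun h => hf ?_) ?_
  · rw [RatFunc.eval, ← Polynomial.eval, h, zero_div]
  · rw [← inv_div, RatFunc.num_div_denom]

lemma X_sub_C_inv_mul_mem_noPoleSubring (hf : f ∈ noPoleSubring z)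
    (hf0 : RatFunc.eval (RingHom.id K) z f = 0) :
    (RatFunc.X - RatFunc.C z)⁻¹ * f ∈ noPoleSubring z := by
  have hnum : f.num.IsRoot z := by
    rw [RatFunc.eval, div_eq_zero_iff] at hf0
    exact hf0.resolve_right hf
  obtain ⟨q, hq⟩ := dvd_iff_isRoot.2 hnum
  refine mem_noPoleSubring_of_eq_div (p := q) hf ?_
  have hXC : (RatFunc.X - RatFunc.C z : RatFunc K) = algebraMap K[X] (RatFunc K) (X - C z) := by
    rw [map_sub, RatFunc.algebraMap_X, RatFunc.algebraMap_C]
  rw [hXC]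
  conv_lhs => rw [← RatFunc.num_div_denom f, hq, map_mul, mul_div_assoc]
  exact inv_mul_cancel_left₀ (RatFunc.algebraMap_ne_zero (X_sub_C_ne_zero z)) _

end NoPole

noncomputable def rhinfSubring : Subring (RatFunc ℂ) :=
  properSubring ⊓ ⨅ z : {z : ℂ // 1 ≤ ‖z‖}, noPoleSubring (z : ℂ)

lemma mem_rhinfSubring {f : RatFunc ℂ} : f ∈ rhinfSubring ↔ MemRHinf f := by
  simp [rhinfSubring, Subring.mem_inf, Subring.mem_iInf, mem_properSubring, mem_noPoleSubring,
    MemRHinf]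

section SubringMatrix

variable {R : Type*} [CommRing R] {n : Type*} [Fintype n] [DecidableEq n] {S : Subring R}
  {A : Matrix n n R}

lemma exists_mapMatrix_subtype_eq (hA : A ∈ S.matrix) :
    ∃ A' : Matrix n n S, S.subtype.mapMatrix A' = A :=
  ⟨.of fun i j => ⟨A i j, hA i j⟩, rfl⟩

lemma det_mem_of_mem_matrix (hA : A ∈ S.matrix) : A.det ∈ S := by
  obtain ⟨A, rfl⟩ := exists_mapMatrix_subtype_eq hA
  rw [← RingHom.map_det]
  exact SetLike.coe_mem _

lemma adjugate_mem_matrix (hA : A ∈ S.matrix) : A.adjugate ∈ S.matrix := by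
  obtain ⟨A, rfl⟩ := exists_mapMatrix_subtype_eq hA
  rw [← RingHom.map_adjugate]
  exact fun i j => SetLike.coe_mem _

end SubringMatrix

section EvalRM

variable {p : ℕ} {z : ℂ} {A B : Matrix (Fin p) (Fin p) (RatFunc ℂ)}

lemma evalRM_mapMatrix_subtype (A : Matrix (Fin p) (Fin p) (noPoleSubring z)) :
    evalRM ((noPoleSubring z).subtype.mapMatrix A) z = (evalHom z).mapMatrix A :=
  rfl

lemma evalRM_mul (hA : A ∈ (noPoleSubring z).matrix) (hB : B ∈ (noPoleSubring z).matrix) :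
    evalRM (A * B) z = evalRM A z * evalRM B z := by
  obtain ⟨A, rfl⟩ := exists_mapMatrix_subtype_eq hA
  obtain ⟨B, rfl⟩ := exists_mapMatrix_subtype_eq hB
  simp only [← map_mul, evalRM_mapMatrix_subtype]

lemma evalRM_add (hA : A ∈ (noPoleSubring z).matrix) (hB : B ∈ (noPoleSubring z).matrix) :
    evalRM (A + B) z = evalRM A z + evalRM B z := by
  obtain ⟨A, rfl⟩ := exists_mapMatrix_subtype_eq hA
  obtain ⟨B, rfl⟩ := exists_mapMatrix_subtype_eq hB
  simp only [← map_add, evalRM_mapMatrix_subtype]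

lemma evalRM_sub (hA : A ∈ (noPoleSubring z).matrix) (hB : B ∈ (noPoleSubring z).matrix) :
    evalRM (A - B) z = evalRM A z - evalRM B z := by
  obtain ⟨A, rfl⟩ := exists_mapMatrix_subtype_eq hA
  obtain ⟨B, rfl⟩ := exists_mapMatrix_subtype_eq hB
  simp only [← map_sub, evalRM_mapMatrix_subtype]

lemma evalRM_one : evalRM (1 : Matrix (Fin p) (Fin p) (RatFunc ℂ)) z = 1 := by
  simpa only [map_one] using evalRM_mapMatrix_subtype (z := z) 1

lemma evalRM_adjugate (hA : A ∈ (noPoleSubring z).matrix) :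
    evalRM A.adjugate z = (evalRM A z).adjugate := by
  obtain ⟨A, rfl⟩ := exists_mapMatrix_subtype_eq hA
  simp only [← RingHom.map_adjugate, evalRM_mapMatrix_subtype]

lemma eval_det_eq_det_evalRM (hA : A ∈ (noPoleSubring z).matrix) :
    RatFunc.eval (RingHom.id ℂ) z A.det = (evalRM A z).det := by
  obtain ⟨A, rfl⟩ := exists_mapMatrix_subtype_eq hA
  rw [← RingHom.map_det, evalRM_mapMatrix_subtype, ← RingHom.map_det]
  rfl

end EvalRM

section RowKernel

variable {K : Type*} [Field K] [StarRing K] {m n : Type*} [Fintype n] {A : Matrix n n K}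
  {v : n → K}

lemma star_vecMul_eq_zero_iff : star v ᵥ* A = 0 ↔ v ∈ LinearMap.ker Aᴴ.mulVecLin := by
  rw [LinearMap.mem_ker, mulVecLin_apply, ← star_eq_zero (x := Aᴴ *ᵥ v), star_mulVec,
    conjTranspose_conjTranspose]

lemma mul_eq_mul_of_ker_conjTranspose_eq_span {l : Type*} {C : Matrix l n K}
    {B B' : Matrix n m K} (hCA : C * A = 0)
    (hker : LinearMap.ker Aᴴ.mulVecLin = Submodule.span K {v})
    (hB : star v ᵥ* B = star v ᵥ* B') : C * B = C * B' := by
  funext i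
  have hrow : star (star (C i)) ᵥ* A = 0 := by
    rw [star_star, ← mul_apply_eq_vecMul, hCA]
    rfl
  rw [star_vecMul_eq_zero_iff, hker, Submodule.mem_span_singleton] at hrow
  obtain ⟨c, hc⟩ := hrow
  rw [mul_apply_eq_vecMul, mul_apply_eq_vecMul, ← star_star (C i), ← hc, star_smul, smul_vecMul,
    smul_vecMul, hB]

end RowKernel

lemma mul_inv_det_smul_adjugate_sub {K : Type*} [Field K] {n : Type*} [Fintype n]
    [DecidableEq n] {D B : Matrix n n K} (hD : D.det ≠ 0) :
    D * (D.det⁻¹ • (D.adjugate - D.adjugate * B)) = 1 - B := by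
  rw [Matrix.mul_smul, Matrix.mul_sub, ← Matrix.mul_assoc, mul_adjugate, smul_mul, Matrix.one_mul,
    ← smul_sub, smul_smul, inv_mul_cancel₀ hD, one_smul]

section Interpolation

variable {p : ℕ} {z : ℂ} {ψ : Fin p → ℂ}

lemma star_vecMul_evalRM_mul_eq_of_bezout {N Y D Z : Matrix (Fin p) (Fin p) (RatFunc ℂ)}
    (hN : N ∈ (noPoleSubring z).matrix) (hY : Y ∈ (noPoleSubring z).matrix)
    (hD : D ∈ (noPoleSubring z).matrix) (hZ : Z ∈ (noPoleSubring z).matrix)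
    (hψ : ψ ∈ LinearMap.ker (evalRM D z)ᴴ.mulVecLin) (hbez : N * Y + D * Z = 1) :
    star ψ ᵥ* (evalRM N z * evalRM Y z) = star ψ := by
  have hbez_z := congrArg (evalRM · z) hbez
  simp only [evalRM_add (mul_mem hN hY) (mul_mem hD hZ), evalRM_mul hN hY, evalRM_mul hD hZ,
    evalRM_one] at hbez_z
  calc star ψ ᵥ* (evalRM N z * evalRM Y z)
      = star ψ ᵥ* (evalRM N z * evalRM Y z) + (star ψ ᵥ* evalRM D z) ᵥ* evalRM Z z := by
        rw [star_vecMul_eq_zero_iff.2 hψ, zero_vecMul, add_zero]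
    _ = star ψ := by rw [vecMul_vecMul, ← vecMul_add, hbez_z, vecMul_one]

lemma evalRM_adjugate_sub_adjugate_mul_eq_zero {D B : Matrix (Fin p) (Fin p) (RatFunc ℂ)}
    (hD : D ∈ (noPoleSubring z).matrix) (hB : B ∈ (noPoleSubring z).matrix)
    (hdet : RatFunc.eval (RingHom.id ℂ) z D.det = 0)
    (hker : LinearMap.ker (evalRM D z)ᴴ.mulVecLin = Submodule.span ℂ {ψ})
    (hψ : star ψ ᵥ* evalRM B z = star ψ) :
    evalRM (D.adjugate - D.adjugate * B) z = 0 := by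
  have hadj := adjugate_mem_matrix hD
  rw [evalRM_sub hadj (mul_mem hadj hB), evalRM_mul hadj hB, evalRM_adjugate hD, sub_eq_zero]
  have hadj_mul : (evalRM D z).adjugate * evalRM D z = 0 := by
    rw [adjugate_mul, ← eval_det_eq_det_evalRM hD, hdet, zero_smul]
  simpa using mul_eq_mul_of_ker_conjTranspose_eq_span hadj_mul hker (B := 1)
    (B' := evalRM B z) (by rw [vecMul_one, hψ])

end Interpolation

lemma memRHinf_inv_mul {f g : RatFunc ℂ} (hf : Proper f) (hf' : ¬ StrictlyProper f)
    (hg : MemRHinf g)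
    (hzero : ∀ z : ℂ, 1 ≤ ‖z‖ → RatFunc.eval (RingHom.id ℂ) z f = 0 →
      SimpleZero f z ∧ RatFunc.eval (RingHom.id ℂ) z g = 0) :
    MemRHinf (f⁻¹ * g) := by
  refine ⟨(hf.inv hf').mul hg.1, fun z hz => ?_⟩
  by_cases hfz : RatFunc.eval (RingHom.id ℂ) z f = 0
  · obtain ⟨⟨h, rfl, -, hh⟩, hgz⟩ := hzero z hz hfz
    have hsplit : ((RatFunc.X - RatFunc.C z) * h)⁻¹ * g
        = h⁻¹ * ((RatFunc.X - RatFunc.C z)⁻¹ * g) := by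
      rw [mul_inv]; ring
    rw [hsplit]
    exact mul_mem (inv_mem_noPoleSubring hh) (X_sub_C_inv_mul_mem_noPoleSubring (hg.2 z hz) hgz)
  · exact mul_mem (inv_mem_noPoleSubring hfz) (hg.2 z hz)

theorem stmt5_general {p Υ : ℕ}
    (N D : Matrix (Fin p) (Fin p) (RatFunc ℂ))
    (hN : ∀ i j, MemRHinf (N i j)) (hD : ∀ i j, MemRHinf (D i j))
    (hdetD : ¬ StrictlyProper D.det)
    (χ : Fin Υ → ℂ)
    (hχreg : ∀ r, 1 ≤ ‖χ r‖)
    (hχsimple : ∀ r, SimpleZero D.det (χ r))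
    (hχall : ∀ z : ℂ, 1 ≤ ‖z‖ →
      (RatFunc.eval (RingHom.id ℂ) z D.det = 0 ↔ ∃ r, χ r = z))
    (ψ : Fin Υ → Fin p → ℂ)
    (hψker : ∀ r, LinearMap.ker ((evalRM D (χ r)).conjTranspose.mulVecLin) =
      Submodule.span ℂ {ψ r}) :
    ∀ Y : Matrix (Fin p) (Fin p) (RatFunc ℂ), (∀ i j, MemRHinf (Y i j)) →
      ((((∀ i j, StrictlyProper (Y i j)) ∧
          ∃ Z : Matrix (Fin p) (Fin p) (RatFunc ℂ),
            (∀ i j, MemRHinf (Z i j)) ∧ N * Y + D * Z = 1) ↔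
        ((∀ i j, StrictlyProper (Y i j)) ∧
          ∀ r, vecMul (star (ψ r)) (evalRM N (χ r) * evalRM Y (χ r)) = star (ψ r))) ∧
      (((∀ i j, StrictlyProper (Y i j)) ∧
          ∀ r, vecMul (star (ψ r)) (evalRM N (χ r) * evalRM Y (χ r)) = star (ψ r)) →
        (∀ i j, MemRHinf (((D.det)⁻¹ • (D.adjugate - D.adjugate * N * Y)) i j)) ∧
        N * Y + D * ((D.det)⁻¹ • (D.adjugate - D.adjugate * N * Y)) = 1)) := by
  intro Y hY
  have hR {A : Matrix (Fin p) (Fin p) (RatFunc ℂ)} (hA : ∀ i j, MemRHinf (A i j)) :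
      A ∈ rhinfSubring.matrix :=
    fun i j => mem_rhinfSubring.2 (hA i j)
  have hP {A : Matrix (Fin p) (Fin p) (RatFunc ℂ)} (hA : ∀ i j, MemRHinf (A i j)) {z : ℂ}
      (hz : 1 ≤ ‖z‖) : A ∈ (noPoleSubring z).matrix :=
    fun i j => (hA i j).2 z hz
  have hdet : Proper D.det := (mem_rhinfSubring.1 (det_mem_of_mem_matrix (hR hD))).1
  have hadj := adjugate_mem_matrix (hR hD)
  have hM : D.adjugate - D.adjugate * (N * Y) ∈ rhinfSubring.matrix :=
    sub_mem hadj (mul_mem hadj (mul_mem (hR hN) (hR hY)))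
  have interpolation_of_bezout {Z : Matrix (Fin p) (Fin p) (RatFunc ℂ)}
      (hZ : ∀ i j, MemRHinf (Z i j)) (hbez : N * Y + D * Z = 1) (r : Fin Υ) :
      star (ψ r) ᵥ* (evalRM N (χ r) * evalRM Y (χ r)) = star (ψ r) := by
    have hz := hχreg r
    refine star_vecMul_evalRM_mul_eq_of_bezout (hP hN hz) (hP hY hz) (hP hD hz) (hP hZ hz) ?_ hbez
    rw [hψker r]
    exact Submodule.mem_span_singleton_self _
  have bezout_of_interpolation
      (hint : ∀ r, star (ψ r) ᵥ* (evalRM N (χ r) * evalRM Y (χ r)) = star (ψ r)) :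
      (∀ i j, MemRHinf (((D.det)⁻¹ • (D.adjugate - D.adjugate * N * Y)) i j)) ∧
        N * Y + D * ((D.det)⁻¹ • (D.adjugate - D.adjugate * N * Y)) = 1 := by
    rw [Matrix.mul_assoc, mul_inv_det_smul_adjugate_sub (ne_zero_of_not_strictlyProper hdetD),
      add_sub_cancel]
    refine ⟨fun i j => memRHinf_inv_mul hdet hdetD (mem_rhinfSubring.1 (hM i j))
      fun z hz hz0 => ?_, rfl⟩
    obtain ⟨r, rfl⟩ := (hχall z hz).1 hz0
    refine ⟨hχsimple r, congrFun₂ (evalRM_adjugate_sub_adjugate_mul_eq_zero (hP hD hz)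
      (mul_mem (hP hN hz) (hP hY hz)) hz0 (hψker r) ?_) i j⟩
    rw [evalRM_mul (hP hN hz) (hP hY hz), hint r]
  exact ⟨⟨fun ⟨hsp, _, hZ, hbez⟩ => ⟨hsp, interpolation_of_bezout hZ hbez⟩,
    fun ⟨hsp, hint⟩ => ⟨hsp, _, bezout_of_interpolation hint⟩⟩,
    fun ⟨_, hint⟩ => bezout_of_interpolation hint⟩

/-- Characterization of strictly proper solutions `Y` of the Bézout identity `N·Y + D·Z = I`
over rational `H∞(𝔼₁)` by interpolation conditions at the unstable zeros of `det D`. -/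
theorem stmt5 {p Υ : ℕ} (hp : 1 ≤ p)
    (N D : Matrix (Fin p) (Fin p) (RatFunc ℂ))
    (hN : ∀ i j, MemRHinf (N i j)) (hD : ∀ i j, MemRHinf (D i j))
    (hdetD : ¬ StrictlyProper D.det)
    (hcoprime : ∃ X₀ Y₀ : Matrix (Fin p) (Fin p) (RatFunc ℂ),
      (∀ i j, MemRHinf (X₀ i j)) ∧ (∀ i j, MemRHinf (Y₀ i j)) ∧ N * X₀ + D * Y₀ = 1)
    (χ : Fin Υ → ℂ) (hχinj : Function.Injective χ)
    (hχreg : ∀ r, 1 ≤ ‖χ r‖)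
    (hχsimple : ∀ r, SimpleZero D.det (χ r))
    (hχall : ∀ z : ℂ, 1 ≤ ‖z‖ →
      (RatFunc.eval (RingHom.id ℂ) z D.det = 0 ↔ ∃ r, χ r = z))
    (ψ : Fin Υ → Fin p → ℂ) (hψne : ∀ r, ψ r ≠ 0)
    (hψker : ∀ r, LinearMap.ker ((evalRM D (χ r)).conjTranspose.mulVecLin) =
      Submodule.span ℂ {ψ r}) :
    ∀ Y : Matrix (Fin p) (Fin p) (RatFunc ℂ), (∀ i j, MemRHinf (Y i j)) →
      ((((∀ i j, StrictlyProper (Y i j)) ∧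
          ∃ Z : Matrix (Fin p) (Fin p) (RatFunc ℂ),
            (∀ i j, MemRHinf (Z i j)) ∧ N * Y + D * Z = 1) ↔
        ((∀ i j, StrictlyProper (Y i j)) ∧
          ∀ r, vecMul (star (ψ r)) (evalRM N (χ r) * evalRM Y (χ r)) = star (ψ r))) ∧
      (((∀ i j, StrictlyProper (Y i j)) ∧
          ∀ r, vecMul (star (ψ r)) (evalRM N (χ r) * evalRM Y (χ r)) = star (ψ r)) →
        (∀ i j, MemRHinf (((D.det)⁻¹ • (D.adjugate - D.adjugate * N * Y)) i j)) ∧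
        N * Y + D * ((D.det)⁻¹ • (D.adjugate - D.adjugate * N * Y)) = 1)) :=
  stmt5_general N D hN hD hdetD χ hχreg hχsimple hχall ψ hψker
end

section
/- Let p ≥ 1 and λ ∈ ℂ. Let N, D, R, Y, Z : ℂ → ℂ^{p×p} be matrix-valued functions that are complex-differentiable at λ (entrywise), and suppose N(z)·Y(z) + D(z)·Z(z) = I for all z in some neighborhood of λ. Set H := N + D·R (pointwise), and suppose that D(λ) and H(λ) are invertible, that Y(λ) = H(λ)⁻¹, and that Y′(λ) = −H(λ)⁻¹·(D(λ) + H′(λ)·H(λ)⁻¹), where H′(λ) denotes the derivative of z ↦ N(z) + D(z)·R(z) at λ. Then (Z − R·Y)(λ) = 0 and the derivative of z ↦ Z(z) − R(z)·Y(z) at λ equals the identity matrix I. -/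
open scoped Matrix.Norms.L2Operator

/-!
Write `H := N + D R` and `G := Z - R Y`. The Bézout identity says exactly that `D G + H Y = 1`
near `λ`. At `λ` this gives `D(λ) G(λ) = 1 - H(λ) Y(λ) = 0`, hence `G(λ) = 0`. Differentiating,
`D' G + D G' + H' Y + H Y' = 0`, so at `λ` we get `D(λ) G'(λ) = -(H' Y + H Y')(λ)`, which the
prescribed value of `Y'(λ)` turns into `D(λ)`; cancelling `D(λ)` gives `G'(λ) = 1`.
-/

open Topology

theorem eq_zero_of_mul_add_mul_eq_one {A : Type*} [Ring A] {d g h y : A}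
    (hsum : d * g + h * y = 1) (hhy : h * y = 1) (hd : IsUnit d) : g = 0 :=
  hd.mul_left_cancel <| by rw [mul_zero, ← add_eq_right.mp (hsum.trans hhy.symm)]

theorem HasDerivAt.eq_one_of_mul_add_mul_eq_one {𝕜 A : Type*} [NontriviallyNormedField 𝕜]
    [NormedRing A] [NormedAlgebra 𝕜 A] {D G H Y : 𝕜 → A} {D' G' H' Y' : A} {x : 𝕜}
    (hG : HasDerivAt G G' x) (hD : HasDerivAt D D' x) (hH : HasDerivAt H H' x)
    (hY : HasDerivAt Y Y' x) (hsum : ∀ᶠ z in 𝓝 x, D z * G z + H z * Y z = 1)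
    (hG0 : G x = 0) (hd : IsUnit (D x)) (hY' : H x * Y' + H' * Y x = -D x) : G' = 1 := by
  have hsum' : HasDerivAt (fun z => D z * G z + H z * Y z) 0 x :=
    (hasDerivAt_const x (1 : A)).congr_of_eventuallyEq hsum
  have hzero := ((hD.mul hG).add (hH.mul hY)).unique hsum'
  rw [hG0, mul_zero, zero_add] at hzero
  refine hd.mul_left_cancel ?_
  calc D x * G' = D x * G' + (H' * Y x + H x * Y') - (H x * Y' + H' * Y x) := by abel
    _ = D x * 1 := by rw [hzero, hY']; noncomm_ring

theorem stmt7_general {p : ℕ} (lam : ℂ)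
    (N D R Y Z : ℂ → Matrix (Fin p) (Fin p) ℂ)
    (hN : DifferentiableAt ℂ N lam) (hD : DifferentiableAt ℂ D lam)
    (hR : DifferentiableAt ℂ R lam) (hY : DifferentiableAt ℂ Y lam)
    (hZ : DifferentiableAt ℂ Z lam)
    (hBez : ∀ᶠ z in nhds lam, N z * Y z + D z * Z z = 1)
    (hDinv : IsUnit (D lam))
    (hHinv : IsUnit (N lam + D lam * R lam))
    (hYlam : Y lam = (N lam + D lam * R lam)⁻¹)
    (hY' : deriv Y lam =
      -((N lam + D lam * R lam)⁻¹ *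
        (D lam + deriv (fun z => N z + D z * R z) lam * (N lam + D lam * R lam)⁻¹))) :
    (Z lam - R lam * Y lam = 0) ∧
    deriv (fun z => Z z - R z * Y z) lam = 1 := by
  set H := fun z => N z + D z * R z
  have hHH : H lam * (H lam)⁻¹ = 1 :=
    Matrix.mul_nonsing_inv _ ((Matrix.isUnit_iff_isUnit_det _).mp hHinv)
  have hsum : ∀ᶠ z in 𝓝 lam, D z * (Z z - R z * Y z) + H z * Y z = 1 :=
    hBez.mono fun z hz => by rw [← hz]; simp only [H]; noncomm_ring
  have hG0 : Z lam - R lam * Y lam = 0 :=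
    eq_zero_of_mul_add_mul_eq_one hsum.self_of_nhds (by rw [hYlam]; exact hHH) hDinv
  refine ⟨hG0, (hZ.sub (hR.mul hY)).hasDerivAt.eq_one_of_mul_add_mul_eq_one hD.hasDerivAt
    (hN.add (hD.mul hR)).hasDerivAt hY.hasDerivAt hsum hG0 hDinv ?_⟩
  calc H lam * deriv Y lam + deriv H lam * Y lam
      = -((H lam * (H lam)⁻¹) * (D lam + deriv H lam * (H lam)⁻¹)) + deriv H lam * (H lam)⁻¹ := by
        rw [hY', hYlam]; noncomm_ring
    _ = -D lam := by rw [hHH]; noncomm_ring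

/-- If `N·Y + D·Z = I` near `λ`, `D(λ)` and `H(λ) := N(λ) + D(λ)R(λ)` are invertible,
`Y(λ) = H(λ)⁻¹` and `Y′(λ) = −H(λ)⁻¹(D(λ) + H′(λ)H(λ)⁻¹)`, then `(Z − R·Y)(λ) = 0` and
`(Z − R·Y)′(λ) = I`. -/
theorem stmt7 {p : ℕ} (hp : 1 ≤ p) (lam : ℂ)
    (N D R Y Z : ℂ → Matrix (Fin p) (Fin p) ℂ)
    (hN : DifferentiableAt ℂ N lam) (hD : DifferentiableAt ℂ D lam)
    (hR : DifferentiableAt ℂ R lam) (hY : DifferentiableAt ℂ Y lam)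
    (hZ : DifferentiableAt ℂ Z lam)
    (hBez : ∀ᶠ z in nhds lam, N z * Y z + D z * Z z = 1)
    (hDinv : IsUnit (D lam))
    (hHinv : IsUnit (N lam + D lam * R lam))
    (hYlam : Y lam = (N lam + D lam * R lam)⁻¹)
    (hY' : deriv Y lam =
      -((N lam + D lam * R lam)⁻¹ *
        (D lam + deriv (fun z => N z + D z * R z) lam * (N lam + D lam * R lam)⁻¹))) :
    (Z lam - R lam * Y lam = 0) ∧
    deriv (fun z => Z z - R z * Y z) lam = 1 :=
  stmt7_general lam N D R Y Z hN hD hR hY hZ hBez hDinv hHinv hYlam hY'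
end

section
/- Define g : ℂ → ℂ by g(s) := s − 1/5 − (1/5)·exp(−s). Then there exists a real number γ > 0 such that g(γ) = 0, the complex derivative g′(γ) ≠ 0, and every s ∈ ℂ with Re(s) ≥ 0 and g(s) = 0 satisfies s = γ. In other words, g has exactly one zero in the closed right half-plane {s ∈ ℂ : Re(s) ≥ 0}, and this zero is real, positive, and simple. -/
/-!
If `g(s) = 0` with `s = x + iy`, `x ≥ 0`, then `y = -b e^{-x} sin y`, so `|y| ≤ |b| |y|` and
`|b| < 1` forces `y = 0`. On `[0, ∞)` the real function `x - a - b e^{-x}` has derivative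
`1 + b e^{-x} ≥ 1 - |b| > 0`, so it has at most one zero there; it is negative at `0` when
`a + b > 0` and positive at `a + 1`, hence it has exactly one, positive, zero. The same bound
`|b e^{-s}| ≤ |b| < 1` shows `g'(s) = 1 + b e^{-s} ≠ 0`.
-/

open Complex

/-- `g(s) = s - a - b e^{-s}`, the characteristic function of `ż(t) = a z(t) + b z(t - 1) + u(t)`. -/
noncomputable def delayChar (a b : ℝ) (s : ℂ) : ℂ := s - a - b * exp (-s)

section

variable {a b : ℝ}

theorem hasDerivAt_delayChar (a b : ℝ) (s : ℂ) :
    HasDerivAt (delayChar a b) (1 + b * exp (-s)) s :=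
  (((hasDerivAt_id s).sub_const (a : ℂ)).sub
    ((hasDerivAt_neg s).cexp.const_mul (b : ℂ))).congr_deriv (by ring)

theorem delayChar_ofReal (x : ℝ) :
    delayChar a b x = ((x - a - b * Real.exp (-x) : ℝ) : ℂ) := by
  push_cast [delayChar]
  rfl

theorem abs_mul_exp_neg_le (b : ℝ) {x : ℝ} (hx : 0 ≤ x) : |b * Real.exp (-x)| ≤ |b| := by
  rw [abs_mul, abs_of_pos (Real.exp_pos _)]
  exact mul_le_of_le_one_right (abs_nonneg b) (Real.exp_le_one_iff.mpr (by linarith))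

theorem norm_mul_exp_neg_le (b : ℝ) {s : ℂ} (hs : 0 ≤ s.re) : ‖(b : ℂ) * exp (-s)‖ ≤ |b| := by
  rw [norm_mul, norm_exp, norm_real, Real.norm_eq_abs, neg_re, ← abs_of_pos (Real.exp_pos _),
    ← abs_mul]
  exact abs_mul_exp_neg_le b hs

theorem one_add_mul_exp_neg_ne_zero (hb : |b| < 1) {s : ℂ} (hs : 0 ≤ s.re) :
    1 + b * exp (-s) ≠ 0 := by
  intro h
  have hnorm := norm_mul_exp_neg_le b hs
  rw [show (b : ℂ) * exp (-s) = -1 by linear_combination h, norm_neg, norm_one] at hnorm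
  linarith

theorem im_eq_zero_of_delayChar_eq_zero (hb : |b| < 1) {s : ℂ} (hs : 0 ≤ s.re)
    (h : delayChar a b s = 0) : s.im = 0 := by
  have him : s.im = -(b * Real.exp (-s.re) * Real.sin s.im) := by
    have := congrArg Complex.im h
    simp only [delayChar, sub_im, ofReal_im, sub_zero, mul_im, ofReal_re, exp_im, neg_re, neg_im,
      Real.sin_neg, mul_neg, zero_mul, add_zero, sub_neg_eq_add, zero_im] at this
    linarith
  have hle : |s.im| ≤ |b| * |s.im| :=
    calc |s.im| = |b * Real.exp (-s.re)| * |Real.sin s.im| := by rw [him, abs_neg, abs_mul, ← him]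
      _ ≤ |b| * |s.im| :=
          mul_le_mul (abs_mul_exp_neg_le b hs) Real.abs_sin_le_abs (abs_nonneg _) (abs_nonneg b)
  have : |s.im| ≤ 0 := by nlinarith [abs_nonneg s.im]
  exact abs_nonpos_iff.mp this

theorem strictMonoOn_delayChar_real (hb : |b| < 1) :
    StrictMonoOn (fun x : ℝ => x - a - b * Real.exp (-x)) (Set.Ici 0) := by
  refine strictMonoOn_of_deriv_pos (convex_Ici 0) (by fun_prop) fun x hx => ?_
  rw [interior_Ici] at hx
  have hd : HasDerivAt (fun x : ℝ => x - a - b * Real.exp (-x)) (1 + b * Real.exp (-x)) x :=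
    (((hasDerivAt_id x).sub_const a).sub
      ((hasDerivAt_neg x).exp.const_mul b)).congr_deriv (by ring)
  rw [hd.deriv]
  linarith [neg_abs_le (b * Real.exp (-x)), abs_mul_exp_neg_le b (le_of_lt hx)]

theorem exists_pos_delayChar_real_eq_zero (hb : |b| < 1) (hab : 0 < a + b) :
    ∃ x : ℝ, 0 < x ∧ x - a - b * Real.exp (-x) = 0 := by
  have ha : 0 < a + 1 := by linarith [le_abs_self b]
  have hright : 0 ≤ (a + 1) - a - b * Real.exp (-(a + 1)) := by
    linarith [le_abs_self (b * Real.exp (-(a + 1))), abs_mul_exp_neg_le b ha.le]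
  have hleft : 0 - a - b * Real.exp (-0) ≤ 0 := by
    simp only [neg_zero, Real.exp_zero]
    linarith
  have hcont : Continuous fun x : ℝ => x - a - b * Real.exp (-x) := by fun_prop
  obtain ⟨x, hx, hx0⟩ := intermediate_value_Icc ha.le hcont.continuousOn ⟨hleft, hright⟩
  refine ⟨x, lt_of_le_of_ne hx.1 ?_, hx0⟩
  rintro rfl
  simp only [neg_zero, Real.exp_zero] at hx0
  linarith

theorem exists_unique_root_delayChar (hb : |b| < 1) (hab : 0 < a + b) :
    ∃ γ : ℝ, 0 < γ ∧ delayChar a b γ = 0 ∧ deriv (delayChar a b) γ ≠ 0 ∧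
      ∀ s : ℂ, 0 ≤ s.re → delayChar a b s = 0 → s = γ := by
  obtain ⟨γ, hγ, hγ0⟩ := exists_pos_delayChar_real_eq_zero hb hab
  refine ⟨γ, hγ, by rw [delayChar_ofReal, hγ0, ofReal_zero], ?_, fun s hs hs0 => ?_⟩
  · rw [(hasDerivAt_delayChar a b γ).deriv]
    exact one_add_mul_exp_neg_ne_zero hb (by simpa using hγ.le)
  · have hs_real : s = s.re := ext rfl (im_eq_zero_of_delayChar_eq_zero hb hs hs0)
    rw [hs_real, delayChar_ofReal, ofReal_eq_zero] at hs0
    rw [hs_real, (strictMonoOn_delayChar_real hb).injOn hs hγ.le (hs0.trans hγ0.symm)]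

end

/-- The characteristic function `g(s) = s − 1/5 − (1/5)e^{−s}` has exactly one zero in the
closed right half-plane, and this zero is real, positive, and simple. -/
theorem stmt12 :
    ∃ γ : ℝ, 0 < γ ∧
      ((γ : ℂ) - 1 / 5 - (1 / 5) * Complex.exp (-(γ : ℂ)) = 0) ∧
      deriv (fun s : ℂ => s - 1 / 5 - (1 / 5) * Complex.exp (-s)) (γ : ℂ) ≠ 0 ∧
      ∀ s : ℂ, 0 ≤ s.re → s - 1 / 5 - (1 / 5) * Complex.exp (-s) = 0 → s = (γ : ℂ) := by
  have hg : delayChar (1 / 5) (1 / 5) = fun s : ℂ => s - 1 / 5 - (1 / 5) * Complex.exp (-s) := by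
    funext s
    push_cast [delayChar]
    rfl
  obtain ⟨γ, h⟩ := exists_unique_root_delayChar (a := 1 / 5) (b := 1 / 5)
    (by norm_num [abs_of_pos]) (by norm_num)
  rw [hg] at h
  exact ⟨γ, h⟩
end
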